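/- Let β > 0 and suppose β < ξ(x) for every x ∈ (0,1/2) (i.e., β is below the minimum value β₁ of ξ). Define G_β on the open domain D = {(x₁,x₂,y₁,y₂) ∈ ℝ⁴ : x₁, x₂, y₁, y₂ > 0, x₁ + x₂ < 1, y₁ + y₂ < 1} by G_β(x₁,x₂,y₁,y₂) = −∑_{i=1}^{3} x_i y_i + (1/β)∑_{i=1}^{3}(x_i log x_i + y_i log y_i), where x₃ = 1 − x₁ − x₂ and y₃ = 1 − y₁ − y₂. Then (1/3, 1/3, 1/3, 1/3) is the unique critical point of G_β on D, and it is the unique local minimum of G_β on D. -/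

import Mathlib

open Real Set

/-- ξ(x) = (1/(1−3x)) log((1−2x)/x), continuously extended by ξ(1/3) = 3. -/
noncomputable def xi (x : ℝ) : ℝ :=
  if x = 1 / 3 then 3 else (1 / (1 - 3 * x)) * Real.log ((1 - 2 * x) / x)

/-- The free energy of the two-component three-spin model with no component-wise
interaction (J = ∞), in coordinates (x₁, x₂, y₁, y₂) with x₃ = 1 − x₁ − x₂ and
y₃ = 1 − y₁ − y₂. -/
noncomputable def G3 (β : ℝ) (x : Fin 4 → ℝ) : ℝ :=
  -(x 0 * x 2 + x 1 * x 3 + (1 - x 0 - x 1) * (1 - x 2 - x 3))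
    + (1 / β) * (x 0 * Real.log (x 0) + x 1 * Real.log (x 1)
        + (1 - x 0 - x 1) * Real.log (1 - x 0 - x 1)
        + x 2 * Real.log (x 2) + x 3 * Real.log (x 3)
        + (1 - x 2 - x 3) * Real.log (1 - x 2 - x 3))

/-- The open domain D: product of two open 2-simplices. -/
def D3 : Set (Fin 4 → ℝ) :=
  {x | 0 < x 0 ∧ 0 < x 1 ∧ 0 < x 2 ∧ 0 < x 3 ∧ x 0 + x 1 < 1 ∧ x 2 + x 3 < 1}

/-!
At a critical point, writing x = (x₁, x₂, x₃) and y = (y₁, y₂, y₃), both log xᵢ − β yᵢ and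
log yᵢ − β xᵢ are independent of i. Pairing their difference with x − y gives
Σ (xᵢ − yᵢ)(log xᵢ − log yᵢ) = −β Σ (xᵢ − yᵢ)², so x = y by monotonicity of log. Then the
strictly concave function log t − β t takes one value at x₁, x₂, x₃, so at most two of them
differ; if exactly two do, x = (a, a, 1 − 2a) up to order, and the critical equation says precisely
that ξ(a) = β, which is excluded. Every local minimum in the open domain is critical.

The uniform point is a local minimum because ξ(1/3) = 3 forces β < 3: for t near 1/3,
t log(3t) ≥ (t − 1/3) + (β/2)(t − 1/3)², and summing these six bounds leaves
G_β − G_β(1/3, 1/3, 1/3, 1/3) ≥ ½ |x − y|².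
-/

theorem sub_mul_log_sub_log_pos {s t : ℝ} (hs : 0 < s) (ht : 0 < t) (hst : s ≠ t) :
    0 < (s - t) * (log s - log t) := by
  rcases hst.lt_or_gt with h | h
  · exact mul_pos_of_neg_of_neg (by linarith) (by linarith [log_lt_log hs h])
  · exact mul_pos (by linarith) (by linarith [log_lt_log ht h])

theorem eq_of_forall_log_sub_mul_eq {ι : Type*} [Fintype ι] {β A B : ℝ} (hβ : 0 ≤ β)
    {x y : ι → ℝ} (hx : ∀ i, 0 < x i) (hy : ∀ i, 0 < y i) (hsum : ∑ i, x i = ∑ i, y i)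
    (hA : ∀ i, log (x i) - β * y i = A) (hB : ∀ i, log (y i) - β * x i = B) : x = y := by
  have hterm (i : ι) : (x i - y i) * (log (x i) - log (y i)) + β * (x i - y i) ^ 2
      = (A - B) * (x i - y i) := by
    rw [← hA i, ← hB i]; ring
  have hzero : ∑ i, ((x i - y i) * (log (x i) - log (y i)) + β * (x i - y i) ^ 2) = 0 := by
    simp only [hterm, ← Finset.mul_sum, Finset.sum_sub_distrib, hsum, sub_self, mul_zero]
  by_contra hne
  obtain ⟨j, hj⟩ := Function.ne_iff.1 hne
  refine hzero.not_gt (Finset.sum_pos' (fun i _ => ?_) ⟨j, Finset.mem_univ _, ?_⟩)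
  · rcases eq_or_ne (x i) (y i) with h | h
    · simp [h]
    · exact add_nonneg (sub_mul_log_sub_log_pos (hx i) (hy i) h).le (by positivity)
  · exact add_pos_of_pos_of_nonneg (sub_mul_log_sub_log_pos (hx j) (hy j) hj) (by positivity)

theorem StrictConcaveOn.eq_or_eq_of_apply_eq {s : Set ℝ} {f : ℝ → ℝ}
    (hf : StrictConcaveOn ℝ s f) {x y z : ℝ} (hx : x ∈ s) (hy : y ∈ s) (hz : z ∈ s)
    (hxy : x < y) (hfxy : f x = f y) (hfz : f z = f x) : z = x ∨ z = y := by
  by_contra! h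
  rcases lt_trichotomy z x with hzx | rfl | hxz
  · have := hf.lt_on_openSegment hz hy (hzx.trans hxy).ne
      (by rw [openSegment_eq_Ioo (hzx.trans hxy)]; exact ⟨hzx, hxy⟩)
    simp [hfz, hfxy] at this
  · exact h.1 rfl
  rcases lt_trichotomy z y with hzy | rfl | hyz
  · have := hf.lt_on_openSegment hx hy hxy.ne
      (by rw [openSegment_eq_Ioo hxy]; exact ⟨hxz, hzy⟩)
    simp [hfz, hfxy] at this
  · exact h.2 rfl
  · have := hf.lt_on_openSegment hx hz (hxy.trans hyz).ne
      (by rw [openSegment_eq_Ioo (hxy.trans hyz)]; exact ⟨hxy, hyz⟩)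
    simp [hfz, hfxy] at this

theorem strictConcaveOn_log_sub_mul (β : ℝ) :
    StrictConcaveOn ℝ (Ioi 0) (fun t => log t - β * t) :=
  strictConcaveOn_log_Ioi.sub_convexOn ((LinearMap.mulLeft ℝ β).convexOn (convex_Ioi 0))

theorem sub_add_mul_sq_le_mul_log_sub_log {β a t : ℝ} (ha : 0 < a) (ht : 0 < t)
    (hβa : β * a ≤ 1) (hβt : β * t ≤ 1) :
    t - a + β / 2 * (t - a) ^ 2 ≤ t * (log t - log a) := by
  set ψ : ℝ → ℝ := fun s => s * (log s - log a) - (s - a) - β / 2 * (s - a) ^ 2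
  set ψ' : ℝ → ℝ := fun s => log s - log a - β * (s - a)
  have hψ (s : ℝ) (hs : 0 < s) : HasDerivAt ψ (ψ' s) s := by
    have hlin := (hasDerivAt_id s).sub_const a
    have h := (((hasDerivAt_id s).mul ((hasDerivAt_log hs.ne').sub_const (log a))).sub hlin).sub
      ((hlin.pow 2).const_mul (β / 2))
    refine h.congr_deriv ?_
    simp only [id]
    field_simp
    ring
  -- On the segment between a and t we have β s ≤ 1, so ψ' has the sign of s - a there.
  have hcont : ContinuousOn ψ (Ioi 0) := fun s hs => (hψ s hs).continuousAt.continuousWithinAt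
  suffices ψ a ≤ ψ t by simp only [ψ, sub_self, mul_zero] at this; norm_num at this; linarith
  rcases le_total a t with hat | hta
  · refine monotoneOn_of_hasDerivWithinAt_nonneg (convex_Icc a t) (f' := ψ')
      (hcont.mono fun s hs => ha.trans_le hs.1) (fun s hs => ?_) (fun s hs => ?_)
      ⟨le_rfl, hat⟩ ⟨hat, le_rfl⟩ hat
    all_goals rw [interior_Icc] at hs; have hs0 : 0 < s := ha.trans hs.1
    · exact (hψ s hs0).hasDerivWithinAt
    · have hlog := one_sub_inv_le_log_of_pos (div_pos hs0 ha)
      rw [log_div hs0.ne' ha.ne', inv_div] at hlog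
      have hβs : β * s ≤ 1 := by nlinarith [hs.1, hs.2]
      have : s - a ≤ s * (log s - log a) :=
        calc s - a = s * (1 - a / s) := by field_simp
          _ ≤ s * (log s - log a) := by gcongr
      nlinarith [mul_nonneg (sub_nonneg.2 hs.1.le) (sub_nonneg.2 hβs)]
  · refine antitoneOn_of_hasDerivWithinAt_nonpos (convex_Icc t a) (f' := ψ')
      (hcont.mono fun s hs => ht.trans_le hs.1) (fun s hs => ?_) (fun s hs => ?_)
      ⟨le_rfl, hta⟩ ⟨hta, le_rfl⟩ hta
    all_goals rw [interior_Icc] at hs; have hs0 : 0 < s := ht.trans hs.1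
    · exact (hψ s hs0).hasDerivWithinAt
    · have hlog := log_le_sub_one_of_pos (div_pos hs0 ha)
      rw [log_div hs0.ne' ha.ne'] at hlog
      have : a * (log s - log a) ≤ s - a :=
        calc a * (log s - log a) ≤ a * (s / a - 1) := by gcongr
          _ = s - a := by field_simp
      nlinarith [mul_nonneg (sub_nonneg.2 hs.2.le) (sub_nonneg.2 hβa)]

theorem xi_eq_of_log_sub_mul_eq {β a : ℝ} (ha : 0 < a) (ha' : a < 1 / 2) (ha3 : a ≠ 1 / 3)
    (h : log a - β * a = log (1 - 2 * a) - β * (1 - 2 * a)) : xi a = β := by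
  have h3 : 1 - 3 * a ≠ 0 := fun h' => ha3 (by linarith)
  rw [xi, if_neg ha3, log_div (by linarith) ha.ne',
    show log (1 - 2 * a) - log a = β * (1 - 3 * a) by linarith]
  field_simp

theorem eq_one_third_of_log_sub_mul_eq {β a b c : ℝ} (hβ₁ : ∀ x ∈ Ioo (0 : ℝ) (1 / 2), β < xi x)
    (ha : 0 < a) (hb : 0 < b) (hc : 0 < c) (habc : a + b + c = 1)
    (hac : log a - β * a = log c - β * c) (hbc : log b - β * b = log c - β * c) :
    a = 1 / 3 ∧ b = 1 / 3 := by
  have repeated {s u : ℝ} (hu : 0 < u) (hsu : u = 1 - 2 * s) (hs : 0 < s)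
      (h : log s - β * s = log u - β * u) : s = 1 / 3 := by
    by_contra hs3
    subst hsu
    exact (hβ₁ s ⟨hs, by linarith⟩).ne' (xi_eq_of_log_sub_mul_eq hs (by linarith) hs3 h)
  rcases eq_or_ne a b with rfl | hab
  · have := repeated hc (by linarith) ha hac
    exact ⟨this, this⟩
  have hc' : c = a ∨ c = b := by
    have hf := strictConcaveOn_log_sub_mul β
    rcases hab.lt_or_gt with h | h
    · exact hf.eq_or_eq_of_apply_eq ha hb hc h (hac.trans hbc.symm) hac.symm
    · exact (hf.eq_or_eq_of_apply_eq hb ha hc h (hbc.trans hac.symm) hbc.symm).symm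
  rcases hc' with rfl | rfl
  · have := repeated hb (by linarith) ha (hac.trans hbc.symm)
    exact ⟨this, by linarith⟩
  · have := repeated ha (by linarith) hb (hbc.trans hac.symm)
    exact ⟨by linarith, this⟩

theorem differentiableAt_G3 (β : ℝ) {p : Fin 4 → ℝ} (hp : p ∈ D3) :
    DifferentiableAt ℝ (G3 β) p := by
  obtain ⟨h0, h1, h2, h3, hX, hY⟩ := hp
  have : 1 - p 0 - p 1 ≠ 0 := by linarith
  have : 1 - p 2 - p 3 ≠ 0 := by linarith
  unfold G3
  fun_prop (disch := first | assumption | positivity)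

theorem hasLineDerivAt_G3 (β : ℝ) {p : Fin 4 → ℝ} (hp : p ∈ D3) (v : Fin 4 → ℝ) :
    HasLineDerivAt ℝ (G3 β)
      (-(v 0 * p 2 + p 0 * v 2 + v 1 * p 3 + p 1 * v 3
          - (v 0 + v 1) * (1 - p 2 - p 3) - (1 - p 0 - p 1) * (v 2 + v 3))
        + (1 / β) * (v 0 * (log (p 0) - log (1 - p 0 - p 1))
          + v 1 * (log (p 1) - log (1 - p 0 - p 1))
          + v 2 * (log (p 2) - log (1 - p 2 - p 3))
          + v 3 * (log (p 3) - log (1 - p 2 - p 3)))) p v := by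
  obtain ⟨h0, h1, h2, h3, hX, hY⟩ := hp
  have coord (i : Fin 4) : HasDerivAt (fun t : ℝ => p i + t * v i) (v i) 0 := by
    simpa using ((hasDerivAt_id (0 : ℝ)).mul_const (v i)).const_add (p i)
  have mul_log {f : ℝ → ℝ} {f' : ℝ} (hf : HasDerivAt f f' 0) (hf0 : 0 < f 0) :
      HasDerivAt (fun t => f t * log (f t)) (f' * (log (f 0) + 1)) 0 :=
    ((hasDerivAt_mul_log hf0.ne').comp 0 hf).congr_deriv (mul_comm _ _)
  have cX := ((coord 0).const_sub 1).sub (coord 1)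
  have cY := ((coord 2).const_sub 1).sub (coord 3)
  have h := ((((coord 0).mul (coord 2)).add ((coord 1).mul (coord 3))).add (cX.mul cY)).neg.add
    (((((((mul_log (coord 0) (by simpa using h0)).add (mul_log (coord 1) (by simpa using h1))).add
      (mul_log cX (by simp; linarith))).add (mul_log (coord 2) (by simpa using h2))).add
      (mul_log (coord 3) (by simpa using h3))).add (mul_log cY (by simp; linarith))).const_mul
        (1 / β))
  refine h.congr_deriv ?_
  simp only [Pi.sub_apply, zero_mul, add_zero]
  ring

theorem log_sub_mul_eq_of_fderiv_G3_eq_zero {β : ℝ} (hβ : β ≠ 0) {p : Fin 4 → ℝ} (hp : p ∈ D3)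
    (hcrit : fderiv ℝ (G3 β) p = 0) :
    log (p 0) - β * p 2 = log (1 - p 0 - p 1) - β * (1 - p 2 - p 3) ∧
    log (p 1) - β * p 3 = log (1 - p 0 - p 1) - β * (1 - p 2 - p 3) ∧
    log (p 2) - β * p 0 = log (1 - p 2 - p 3) - β * (1 - p 0 - p 1) ∧
    log (p 3) - β * p 1 = log (1 - p 2 - p 3) - β * (1 - p 0 - p 1) := by
  have hF : HasFDerivAt (G3 β) (0 : (Fin 4 → ℝ) →L[ℝ] ℝ) p :=
    hcrit ▸ (differentiableAt_G3 β hp).hasFDerivAt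
  have partial_eq (i : Fin 4) := (hasLineDerivAt_G3 β hp (Pi.single i 1)).unique
    (hF.hasLineDerivAt _)
  have e0 := partial_eq 0
  have e1 := partial_eq 1
  have e2 := partial_eq 2
  have e3 := partial_eq 3
  simp only [Pi.single_eq_same, Pi.single_eq_of_ne, ne_eq, Fin.reduceEq, not_false_eq_true,
    one_mul, mul_zero, zero_mul, add_zero, zero_add, sub_zero, neg_sub, mul_one, one_div,
    zero_apply] at e0 e1 e2 e3
  field_simp at e0 e1 e2 e3
  refine ⟨?_, ?_, ?_, ?_⟩ <;> linarith

theorem G3_one_third (β : ℝ) :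
    G3 β ![1/3, 1/3, 1/3, 1/3] = -(1 / 3) + 1 / β * (2 * log (1 / 3)) := by
  have h : (1 : ℝ) - 1 / 3 - 1 / 3 = 1 / 3 := by norm_num
  simp only [G3, Matrix.cons_val, h]
  ring

theorem G3_one_third_le {β : ℝ} (hβ : 0 < β) (hβ3 : β ≤ 3) {x : Fin 4 → ℝ}
    (hx : ∀ t ∈ ({x 0, x 1, 1 - x 0 - x 1, x 2, x 3, 1 - x 2 - x 3} : Set ℝ),
      0 < t ∧ β * t ≤ 1) :
    G3 β ![1/3, 1/3, 1/3, 1/3] ≤ G3 β x := by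
  have bound (t : ℝ) (ht : t ∈ ({x 0, x 1, 1 - x 0 - x 1, x 2, x 3, 1 - x 2 - x 3} : Set ℝ)) :=
    sub_add_mul_sq_le_mul_log_sub_log (a := 1 / 3) (by norm_num) (hx t ht).1 (by linarith)
      (hx t ht).2
  have hsq : 0 ≤ β / 2 * ((x 0 - x 2) ^ 2 + (x 1 - x 3) ^ 2 + (x 0 + x 1 - x 2 - x 3) ^ 2) := by
    positivity
  have key : β * (G3 β x - G3 β ![1/3, 1/3, 1/3, 1/3]) =
      β * (1 / 3 - (x 0 * x 2 + x 1 * x 3 + (1 - x 0 - x 1) * (1 - x 2 - x 3)))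
        + (x 0 * (log (x 0) - log (1 / 3)) + x 1 * (log (x 1) - log (1 / 3))
          + (1 - x 0 - x 1) * (log (1 - x 0 - x 1) - log (1 / 3))
          + x 2 * (log (x 2) - log (1 / 3)) + x 3 * (log (x 3) - log (1 / 3))
          + (1 - x 2 - x 3) * (log (1 - x 2 - x 3) - log (1 / 3))) := by
    rw [G3_one_third, G3]
    field_simp
    ring
  have : 0 ≤ β * (G3 β x - G3 β ![1/3, 1/3, 1/3, 1/3]) := by
    rw [key]
    linarith [bound (x 0) (by simp), bound (x 1) (by simp), bound (1 - x 0 - x 1) (by simp),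
      bound (x 2) (by simp), bound (x 3) (by simp), bound (1 - x 2 - x 3) (by simp)]
  linarith [(mul_nonneg_iff_of_pos_left hβ).1 this]

theorem isLocalMin_G3_one_third {β : ℝ} (hβ : 0 < β) (hβ3 : β < 3) :
    IsLocalMin (G3 β) ![1/3, 1/3, 1/3, 1/3] := by
  have near (f : (Fin 4 → ℝ) → ℝ) (hf : Continuous f) (hfc : f ![1/3, 1/3, 1/3, 1/3] = 1 / 3) :
      ∀ᶠ x in nhds ![1/3, 1/3, 1/3, 1/3], 0 < f x ∧ β * f x ≤ 1 := by
    have hc : f ![1/3, 1/3, 1/3, 1/3] ∈ Ioo 0 (1 / β) := by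
      rw [hfc, mem_Ioo, lt_div_iff₀ hβ]
      constructor <;> linarith
    filter_upwards [hf.continuousAt.eventually_mem (isOpen_Ioo.mem_nhds hc)] with x hx
    exact ⟨hx.1, by rw [← le_div_iff₀' hβ]; exact hx.2.le⟩
  filter_upwards [near (· 0) (by fun_prop) (by simp), near (· 1) (by fun_prop) (by simp),
    near (fun x => 1 - x 0 - x 1) (by fun_prop) (by norm_num),
    near (· 2) (by fun_prop) (by simp), near (· 3) (by fun_prop) (by simp),
    near (fun x => 1 - x 2 - x 3) (by fun_prop) (by simp; norm_num)] with x h0 h1 hX h2 h3 hY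
  exact G3_one_third_le hβ hβ3.le (by rintro t (rfl | rfl | rfl | rfl | rfl | rfl) <;> assumption)

theorem eq_one_third_of_fderiv_G3_eq_zero {β : ℝ} (hβ : 0 < β)
    (hβ₁ : ∀ x ∈ Ioo (0 : ℝ) (1 / 2), β < xi x) {p : Fin 4 → ℝ} (hp : p ∈ D3)
    (hcrit : fderiv ℝ (G3 β) p = 0) : p = ![1/3, 1/3, 1/3, 1/3] := by
  obtain ⟨e0, e1, e2, e3⟩ := log_sub_mul_eq_of_fderiv_G3_eq_zero hβ.ne' hp hcrit
  obtain ⟨h0, h1, h2, h3, hX, hY⟩ := hp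
  have hxy : ![p 0, p 1, 1 - p 0 - p 1] = ![p 2, p 3, 1 - p 2 - p 3] := by
    refine eq_of_forall_log_sub_mul_eq hβ.le (fun i => ?_) (fun i => ?_) ?_
      (A := log (1 - p 0 - p 1) - β * (1 - p 2 - p 3))
      (B := log (1 - p 2 - p 3) - β * (1 - p 0 - p 1)) (fun i => ?_) (fun i => ?_)
    all_goals try fin_cases i
    all_goals simp [Fin.sum_univ_three] <;> linarith
  have h20 : p 2 = p 0 := (congrFun hxy 0).symm
  have h31 : p 3 = p 1 := (congrFun hxy 1).symm
  rw [h20, h31] at e2 e3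
  obtain ⟨ha, hb⟩ := eq_one_third_of_log_sub_mul_eq hβ₁ h0 h1 (by linarith) (by ring) e2 e3
  ext i
  fin_cases i <;> simp [ha, hb, h20, h31]

/-- if 0 < β < ξ(x) for all x ∈ (0,1/2), then (1/3,1/3,1/3,1/3) is the
unique critical point of G_β on D, and the unique local minimum of G_β on D. -/
theorem stmt_7 (β : ℝ) (hβ : 0 < β) (hβ₁ : ∀ x ∈ Ioo (0 : ℝ) (1 / 2), β < xi x) :
    (∀ p ∈ D3, fderiv ℝ (G3 β) p = 0 ↔ p = ![1/3, 1/3, 1/3, 1/3]) ∧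
    IsLocalMin (G3 β) ![1/3, 1/3, 1/3, 1/3] ∧
    (∀ p ∈ D3, IsLocalMin (G3 β) p → p = ![1/3, 1/3, 1/3, 1/3]) := by
  have hβ3 : β < 3 := by simpa [xi] using hβ₁ (1 / 3) ⟨by norm_num, by norm_num⟩
  have hmin := isLocalMin_G3_one_third hβ hβ3
  refine ⟨fun p hp => ⟨eq_one_third_of_fderiv_G3_eq_zero hβ hβ₁ hp, ?_⟩, hmin,
    fun p hp h => eq_one_third_of_fderiv_G3_eq_zero hβ hβ₁ hp h.fderiv_eq_zero⟩
  rintro rfl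
  exact hmin.fderiv_eq_zero
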